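/- arXiv:1312.0271 — 4 statements merged into one kernel-verified Lean document; each statement's English description precedes it below -/
import Mathlib

section
/- Let Y be a geodesic metric space and f : X → Y a homeomorphism from a metric space X onto Y. Then for every x ∈ X and every r with 0 < r ≤ diam(X), one has inf_{d(x,y) ≥ r} d(f(x), f(y)) ≥ inf_{d(x,y) = r} d(f(x), f(y)). -/
open Set

section UnitSpeed

variable {Y : Type*} [PseudoMetricSpace Y] {γ : ℝ → Y}

theorem continuousOn_of_dist_eq_abs_sub {s : Set ℝ}
    (hγ : ∀ a ∈ s, ∀ b ∈ s, dist (γ a) (γ b) = |a - b|) : ContinuousOn γ s :=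
  LipschitzOnWith.continuousOn (K := 1) <| LipschitzOnWith.of_dist_le_mul fun a ha b hb => by
    rw [hγ a ha b hb, NNReal.coe_one, one_mul, Real.dist_eq]

theorem dist_le_of_dist_eq_abs_sub {D t : ℝ}
    (hγ : ∀ a ∈ Icc 0 D, ∀ b ∈ Icc 0 D, dist (γ a) (γ b) = |a - b|) (ht : t ∈ Icc 0 D) :
    dist (γ t) (γ D) ≤ D := by
  rw [hγ t ht D (right_mem_Icc.2 (ht.1.trans ht.2)), abs_sub_comm,
    abs_of_nonneg (sub_nonneg.2 ht.2)]
  linarith [ht.1]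

end UnitSpeed

theorem IsPreconnected.exists_dist_eq {X : Type*} [PseudoMetricSpace X] {S : Set X}
    (hS : IsPreconnected S) {x a b : X} {r : ℝ} (ha : a ∈ S) (hb : b ∈ S)
    (hra : dist x a ≤ r) (hrb : r ≤ dist x b) : ∃ z ∈ S, dist x z = r :=
  hS.intermediate_value ha hb (continuous_const.dist continuous_id).continuousOn ⟨hra, hrb⟩

theorem inf_sphere_le_inf_complement_general
    {X Y : Type*} [MetricSpace X] [MetricSpace Y]
    (hgeo : ∀ p q : Y, ∃ γ : ℝ → Y, γ 0 = p ∧ γ (dist p q) = q ∧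
      ∀ s ∈ Set.Icc (0 : ℝ) (dist p q), ∀ t ∈ Set.Icc (0 : ℝ) (dist p q),
        dist (γ s) (γ t) = |s - t|)
    (f : X ≃ₜ Y) (x : X) (r : ℝ) (hr : 0 < r) :
    (⨅ y ∈ {y : X | dist x y = r}, edist (f x) (f y)) ≤
      ⨅ y ∈ {y : X | r ≤ dist x y}, edist (f x) (f y) := by
  refine le_iInf₂ fun y hy => ?_
  obtain ⟨γ, hγ0, hγD, hγ⟩ := hgeo (f y) (f x)
  set D := dist (f y) (f x)
  -- The pulled-back geodesic joins `y` to `x`, so it crosses the sphere of radius `r` about `x`.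
  have hpath : IsPreconnected (f.symm '' (γ '' Icc 0 D)) :=
    (isPreconnected_Icc.image γ (continuousOn_of_dist_eq_abs_sub hγ)).image f.symm
      f.symm.continuous.continuousOn
  have hx_mem : x ∈ f.symm '' (γ '' Icc 0 D) :=
    ⟨f x, ⟨D, right_mem_Icc.2 dist_nonneg, hγD⟩, f.symm_apply_apply x⟩
  have hy_mem : y ∈ f.symm '' (γ '' Icc 0 D) :=
    ⟨f y, ⟨0, left_mem_Icc.2 dist_nonneg, hγ0⟩, f.symm_apply_apply y⟩
  obtain ⟨_, ⟨_, ⟨t, ht, rfl⟩, rfl⟩, hz⟩ :=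
    hpath.exists_dist_eq hx_mem hy_mem ((dist_self x).trans_le hr.le) hy
  calc (⨅ z ∈ {z : X | dist x z = r}, edist (f x) (f z))
      ≤ edist (f x) (f (f.symm (γ t))) := biInf_le _ hz
    _ ≤ edist (f x) (f y) := by
      have hle := dist_le_of_dist_eq_abs_sub hγ ht
      rw [hγD] at hle
      rw [f.apply_symm_apply, edist_comm, edist_dist, edist_dist, dist_comm (f x)]
      exact ENNReal.ofReal_le_ofReal hle

/-- If `Y` is a geodesic metric space and `f : X → Y` is a homeomorphism, then for every
`x ∈ X` and `0 < r ≤ diam X`, the infimum of `d(f x, f y)` over `{y | d(x,y) ≥ r}` is at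
least the infimum over the sphere `{y | d(x,y) = r}`. -/
theorem inf_sphere_le_inf_complement
    {X Y : Type*} [MetricSpace X] [MetricSpace Y]
    (hgeo : ∀ p q : Y, ∃ γ : ℝ → Y, γ 0 = p ∧ γ (dist p q) = q ∧
      ∀ s ∈ Set.Icc (0 : ℝ) (dist p q), ∀ t ∈ Set.Icc (0 : ℝ) (dist p q),
        dist (γ s) (γ t) = |s - t|)
    (f : X ≃ₜ Y) (x : X) (r : ℝ) (hr : 0 < r)
    (hrdiam : ENNReal.ofReal r ≤ EMetric.diam (Set.univ : Set X)) :
    (⨅ y ∈ {y : X | dist x y = r}, edist (f x) (f y)) ≤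
      ⨅ y ∈ {y : X | r ≤ dist x y}, edist (f x) (f y) :=
  inf_sphere_le_inf_complement_general hgeo f x r hr
end

section
/- Let M and N be metric spaces, f : M → N a map, x ∈ M, and suppose f⁻¹({f(x)}) = {x, x₁, ..., x_N} is finite. Suppose there is C ≥ 1 such that for all ρ > 0 the preimage f⁻¹(B(f(x), ρ)) contains B(x, ρ/C) ∪ ⋃ᵢ B(xᵢ, ρ/C) and is contained in B(x, Cρ) ∪ ⋃ᵢ B(xᵢ, Cρ). If ρ₁ > 0 is such that the balls B(x, 2Cρ) and B(xᵢ, 2Cρ) are pairwise disjoint for ρ < ρ₁, then for every y ∈ M with 0 < d(x,y) < 2Cρ₁ one has d(f(x), f(y)) > d(x,y)/(2C). -/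
/-!
Suppose `d(f x, f y) ≤ d(x, y) / (2C)` and pick `ρ` slightly above `d(x, y) / (2C)`, still
below `ρ₁` and `d(x, y) / C`. Then `y` lies in `f⁻¹ B(f x, ρ)`, hence in some ball of radius `Cρ`
around the fiber; it is not the ball around `x` since `Cρ < d(x, y)`, and it is not a ball around
some `xᵢ` since `y ∈ B(x, 2Cρ)`, which is disjoint from `B(xᵢ, 2Cρ)`.
-/

open Metric

theorem le_dist_of_preimage_ball_subset {M N ι : Type*} [PseudoMetricSpace M]
    [PseudoMetricSpace N] {f : M → N} {x y : M} {xs : ι → M} {C ρ : ℝ}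
    (hup : f ⁻¹' ball (f x) ρ ⊆ ball x (C * ρ) ∪ ⋃ i, ball (xs i) (C * ρ))
    (hdisj : ∀ i, Disjoint (ball x (2 * C * ρ)) (ball (xs i) (2 * C * ρ)))
    (hy_ge : C * ρ ≤ dist x y) (hy_lt : dist x y < 2 * C * ρ) :
    ρ ≤ dist (f x) (f y) := by
  by_contra! hfy
  have hy : y ∈ f ⁻¹' ball (f x) ρ := by rwa [Set.mem_preimage, mem_ball, dist_comm]
  rcases hup hy with hyx | hyxs
  · rw [mem_ball, dist_comm] at hyx
    linarith
  · obtain ⟨i, hyi⟩ := Set.mem_iUnion.mp hyxs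
    have hyi' : y ∈ ball (xs i) (2 * C * ρ) := ball_subset_ball (by linarith) hyi
    have hyx : y ∈ ball x (2 * C * ρ) := by rwa [mem_ball, dist_comm]
    exact Set.disjoint_left.mp (hdisj i) hyx hyi'

theorem dist_image_lower_bound_general {M N : Type*} [MetricSpace M] [MetricSpace N]
    (f : M → N) (x : M) (Nn : ℕ) (xs : Fin Nn → M)
    (C : ℝ) (hC : 1 ≤ C)
    (hup : ∀ ρ > 0, f ⁻¹' Metric.ball (f x) ρ ⊆
      Metric.ball x (C * ρ) ∪ ⋃ i, Metric.ball (xs i) (C * ρ))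
    (ρ₁ : ℝ)
    (hdisj : ∀ ρ, 0 < ρ → ρ < ρ₁ →
      (∀ i, Disjoint (Metric.ball x (2 * C * ρ)) (Metric.ball (xs i) (2 * C * ρ))) ∧
      ∀ i j, i ≠ j →
        Disjoint (Metric.ball (xs i) (2 * C * ρ)) (Metric.ball (xs j) (2 * C * ρ)))
    (y : M) (hy0 : 0 < dist x y) (hy1 : dist x y < 2 * C * ρ₁) :
    dist x y / (2 * C) < dist (f x) (f y) := by
  have hCpos : 0 < C := by linarith
  have hlt_ρ₁ : dist x y / (2 * C) < ρ₁ := by rw [div_lt_iff₀ (by positivity)]; linarith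
  have hlt_div : dist x y / (2 * C) < dist x y / C := by gcongr; linarith
  by_contra! hfy
  obtain ⟨ρ, hρ_gt, hρ_lt⟩ := exists_between (lt_min hlt_ρ₁ hlt_div)
  have hρpos : 0 < ρ := lt_trans (by positivity) hρ_gt
  have hρ_le : ρ ≤ dist (f x) (f y) :=
    le_dist_of_preimage_ball_subset (hup ρ hρpos)
      (hdisj ρ hρpos (hρ_lt.trans_le (min_le_left _ _))).1
      ((le_div_iff₀' hCpos).mp (hρ_lt.trans_le (min_le_right _ _)).le)
      ((div_lt_iff₀' (by positivity)).mp hρ_gt)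
  linarith

/-- Quantitative lower bound for maps with finite fibers satisfying ball-sandwiching
inclusions: if `f⁻¹{f x} = {x, x₁, …, x_N}`, the preimage of `B(f x, ρ)` is sandwiched
between the unions of balls of radii `ρ/C` and `Cρ` around the fiber, and the balls of
radius `2Cρ` around the fiber points are pairwise disjoint for `ρ < ρ₁`, then
`d(f x, f y) > d(x,y)/(2C)` for all `y` with `0 < d(x,y) < 2Cρ₁`. -/
theorem dist_image_lower_bound {M N : Type*} [MetricSpace M] [MetricSpace N]
    (f : M → N) (x : M) (Nn : ℕ) (xs : Fin Nn → M)
    (hfiber : f ⁻¹' {f x} = insert x (Set.range xs))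
    (C : ℝ) (hC : 1 ≤ C)
    (hlow : ∀ ρ > 0, Metric.ball x (ρ / C) ∪ (⋃ i, Metric.ball (xs i) (ρ / C)) ⊆
      f ⁻¹' Metric.ball (f x) ρ)
    (hup : ∀ ρ > 0, f ⁻¹' Metric.ball (f x) ρ ⊆
      Metric.ball x (C * ρ) ∪ ⋃ i, Metric.ball (xs i) (C * ρ))
    (ρ₁ : ℝ) (hρ₁ : 0 < ρ₁)
    (hdisj : ∀ ρ, 0 < ρ → ρ < ρ₁ →
      (∀ i, Disjoint (Metric.ball x (2 * C * ρ)) (Metric.ball (xs i) (2 * C * ρ))) ∧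
      ∀ i j, i ≠ j →
        Disjoint (Metric.ball (xs i) (2 * C * ρ)) (Metric.ball (xs j) (2 * C * ρ)))
    (y : M) (hy0 : 0 < dist x y) (hy1 : dist x y < 2 * C * ρ₁) :
    dist x y / (2 * C) < dist (f x) (f y) :=
  dist_image_lower_bound_general f x Nn xs C hC hup ρ₁ hdisj y hy0 hy1
end

section
/- For the multi-twist map F_a(z₁, ..., z_{n+1}) = (|z₁|·e^{i·a·arg z₁}, ..., |z_{n+1}|·e^{i·a·arg z_{n+1}}) with a a positive integer, at every point p of the sphere S^{2n+1} ⊂ ℂ^{n+1} where all coordinates are nonzero, the differential satisfies ‖v‖ ≤ ‖(F_a)_* v‖ ≤ a·‖v‖ for every tangent vector v, where ‖·‖ is the Euclidean norm on ℂ^{n+1}. In particular in polar coordinates z_j = r_j e^{iθ_j}, one computes ‖(F_a)_* v‖² = Σⱼ ((cos θⱼ v_{xⱼ} + sin θⱼ v_{yⱼ})² + a²(sin θⱼ v_{xⱼ} - cos θⱼ v_{yⱼ})²). -/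
/-!
Write `F_a(w) = ‖w‖ e^{i a arg w}` for one coordinate. Since `arg` is additive modulo `2π` and `a`
is an integer, `F_a` is multiplicative, so near `z ≠ 0` we have `F_a(w) = F_a(z) F_a(w / z)` with
`w / z` near `1`. On the slit plane `F_a = exp ∘ T_a ∘ log`, where `T_a(x + iy) = x + a i y`, hence
`dF_a(z) v = F_a(z) T_a(v / z)`: the radial component of `v` is kept and the angular one is scaled by
`a`, which gives both the polar formula and `‖v‖ ≤ ‖dF_a(z) v‖ ≤ a ‖v‖` for `a ≥ 1`. The multi-twist
acts coordinatewise, and the Euclidean norm squared is the sum of the coordinate norms squared.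
-/

/-- The multi-twist map `F_a : ℂ^{n+1} → ℂ^{n+1}`,
`F_a(z)ⱼ = |zⱼ| e^{i a arg zⱼ}` (with value `0` when `zⱼ = 0`). -/
noncomputable def multiTwist (n a : ℕ) (z : EuclideanSpace ℂ (Fin (n + 1))) :
    EuclideanSpace ℂ (Fin (n + 1)) :=
  WithLp.toLp 2 (fun j => ((‖z j‖ : ℝ) : ℂ) * Complex.exp (Complex.I * (a : ℂ) * (Complex.arg (z j) : ℂ)))

open Complex WithLp

section PiLp

variable {𝕜 ι : Type*} [NontriviallyNormedField 𝕜] [Fintype ι] {E F : ι → Type*}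
  [∀ i, NormedAddCommGroup (E i)] [∀ i, NormedSpace 𝕜 (E i)]
  [∀ i, NormedAddCommGroup (F i)] [∀ i, NormedSpace 𝕜 (F i)]
  (p : ENNReal) [Fact (1 ≤ p)] {g : ∀ i, E i → F i} {x : PiLp p E}

theorem PiLp.differentiableAt_map (hg : ∀ i, DifferentiableAt 𝕜 (g i) (x i)) :
    DifferentiableAt 𝕜 (fun y : PiLp p E => toLp p fun i => g i (y i)) x :=
  (differentiableAt_piLp p).2 fun i =>
    (hg i).comp x (PiLp.hasFDerivAt_apply p x i).differentiableAt

theorem PiLp.fderiv_map_apply (hg : ∀ i, DifferentiableAt 𝕜 (g i) (x i)) (v : PiLp p E)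
    (i : ι) :
    fderiv 𝕜 (fun y : PiLp p E => toLp p fun i => g i (y i)) x v i =
      fderiv 𝕜 (g i) (x i) (v i) := by
  have hcomp := (PiLp.hasFDerivAt_apply p _ i).comp x (PiLp.differentiableAt_map p hg).hasFDerivAt
  have hcoord := (hg i).hasFDerivAt.comp x (PiLp.hasFDerivAt_apply (𝕜 := 𝕜) p x i)
  exact congr($(hcomp.unique hcoord) v)

end PiLp

section Twist

noncomputable def twist (a : ℕ) (z : ℂ) : ℂ :=
  ((‖z‖ : ℝ) : ℂ) * exp (I * (a : ℂ) * (arg z : ℂ))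

noncomputable def twistLinear (a : ℕ) : ℂ →L[ℝ] ℂ :=
  reCLM.smulRight 1 + imCLM.smulRight ((a : ℂ) * I)

variable (a : ℕ)

@[simp]
theorem twistLinear_apply (ζ : ℂ) : twistLinear a ζ = ζ.re + a * ζ.im * I := by
  simp [twistLinear]
  ring

theorem sq_norm_twistLinear (ζ : ℂ) : ‖twistLinear a ζ‖ ^ 2 = ζ.re ^ 2 + a ^ 2 * ζ.im ^ 2 := by
  rw [twistLinear_apply, Complex.sq_norm, normSq_apply]
  simp
  ring

@[simp]
theorem twist_zero : twist a 0 = 0 := by simp [twist]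

theorem norm_twist (z : ℂ) : ‖twist a z‖ = ‖z‖ := by
  rw [twist, norm_mul, show I * a * arg z = ((a * arg z : ℝ) : ℂ) * I by push_cast; ring,
    norm_exp_ofReal_mul_I]
  simp

theorem twist_of_ne_zero {z : ℂ} (hz : z ≠ 0) : twist a z = ‖z‖ * (z / ‖z‖) ^ a := by
  have hρ : ((‖z‖ : ℝ) : ℂ) ≠ 0 := by simpa using hz
  have hu : exp (arg z * I) = z / ‖z‖ := by
    rw [eq_div_iff hρ, mul_comm]
    exact norm_mul_exp_arg_mul_I z
  rw [twist, ← hu, ← exp_nat_mul]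
  ring_nf

theorem twist_mul (z w : ℂ) : twist a (z * w) = twist a z * twist a w := by
  rcases eq_or_ne z 0 with rfl | hz
  · simp
  rcases eq_or_ne w 0 with rfl | hw
  · simp
  rw [twist_of_ne_zero a hz, twist_of_ne_zero a hw, twist_of_ne_zero a (mul_ne_zero hz hw),
    norm_mul, ofReal_mul, mul_div_mul_comm, mul_pow]
  ring

theorem twist_eq_exp_twistLinear_log {z : ℂ} (hz : z ≠ 0) :
    twist a z = exp (twistLinear a (log z)) := by
  rw [twistLinear_apply, log_re, log_im, exp_add, ← ofReal_exp,
    Real.exp_log (norm_pos_iff.mpr hz), twist]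
  ring_nf

theorem hasFDerivAt_twist {z : ℂ} (hz : z ≠ 0) :
    HasFDerivAt (twist a) (twist a z • (twistLinear a).comp (z⁻¹ • (1 : ℂ →L[ℝ] ℂ))) z := by
  set L : ℂ →L[ℝ] ℂ := z⁻¹ • 1
  have hL : ∀ w, L w = z⁻¹ * w := fun w => rfl
  have hLz : L z = 1 := by rw [hL, inv_mul_cancel₀ hz]
  -- `F_a(w) = F_a(z) F_a(w / z)` moves the computation to `1`, where `log` is differentiable
  -- even when `z` lies on its cut
  have hloc : twist a =ᶠ[nhds z] fun w => twist a z * exp (twistLinear a (log (L w))) := by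
    filter_upwards [isOpen_ne.mem_nhds hz] with w hw
    rw [hL, ← twist_eq_exp_twistLinear_log a (mul_ne_zero (inv_ne_zero hz) hw), ← twist_mul,
      mul_inv_cancel_left₀ hz]
  have hlog := (hasStrictDerivAt_log (x := L z) (by simp [hLz])).hasDerivAt.hasFDerivAt
  have hexp := (hasDerivAt_exp (twistLinear a (log (L z)))).hasFDerivAt
  have hcomp := (hexp.restrictScalars ℝ).comp z
    ((twistLinear a).hasFDerivAt.comp z ((hlog.restrictScalars ℝ).comp z L.hasFDerivAt))
  refine ((hcomp.const_mul (twist a z)).congr_of_eventuallyEq hloc).congr_fderiv ?_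
  ext1 v
  simp [hLz]

theorem fderiv_twist_apply {z : ℂ} (hz : z ≠ 0) (v : ℂ) :
    fderiv ℝ (twist a) z v = twist a z * twistLinear a (z⁻¹ * v) := by
  simp [(hasFDerivAt_twist a hz).fderiv]

theorem sq_norm_fderiv_twist {z : ℂ} (hz : z ≠ 0) (v : ℂ) :
    ‖fderiv ℝ (twist a) z v‖ ^ 2 =
      ‖z‖ ^ 2 * ((z⁻¹ * v).re ^ 2 + a ^ 2 * (z⁻¹ * v).im ^ 2) := by
  rw [fderiv_twist_apply a hz, norm_mul, norm_twist, mul_pow, sq_norm_twistLinear]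

theorem sq_norm_eq_sq_norm_mul_inv_mul {z : ℂ} (hz : z ≠ 0) (v : ℂ) :
    ‖v‖ ^ 2 = ‖z‖ ^ 2 * ((z⁻¹ * v).re ^ 2 + (z⁻¹ * v).im ^ 2) := by
  conv_lhs => rw [← mul_inv_cancel_left₀ hz v, norm_mul, mul_pow, Complex.sq_norm (_ * _),
    normSq_apply]
  ring

theorem norm_mul_re_inv_mul {z : ℂ} (hz : z ≠ 0) (v : ℂ) :
    ‖z‖ * (z⁻¹ * v).re = Real.cos (arg z) * v.re + Real.sin (arg z) * v.im := by
  have hρ : ‖z‖ ≠ 0 := by simpa using hz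
  rw [cos_arg hz, sin_arg, mul_re, inv_re, inv_im, normSq_eq_norm_sq]
  field_simp
  ring

theorem norm_mul_im_inv_mul {z : ℂ} (hz : z ≠ 0) (v : ℂ) :
    ‖z‖ * (z⁻¹ * v).im = Real.cos (arg z) * v.im - Real.sin (arg z) * v.re := by
  have hρ : ‖z‖ ≠ 0 := by simpa using hz
  rw [cos_arg hz, sin_arg, mul_im, inv_re, inv_im, normSq_eq_norm_sq]
  field_simp
  ring

theorem sq_norm_fderiv_twist_eq_polar {z : ℂ} (hz : z ≠ 0) (v : ℂ) :
    ‖fderiv ℝ (twist a) z v‖ ^ 2 =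
      (Real.cos (arg z) * v.re + Real.sin (arg z) * v.im) ^ 2 +
        a ^ 2 * (Real.sin (arg z) * v.re - Real.cos (arg z) * v.im) ^ 2 := by
  rw [sq_norm_fderiv_twist a hz, ← norm_mul_re_inv_mul hz, ← neg_sub, ← norm_mul_im_inv_mul hz]
  ring

theorem sq_norm_le_sq_norm_fderiv_twist (ha : 1 ≤ a) {z : ℂ} (hz : z ≠ 0) (v : ℂ) :
    ‖v‖ ^ 2 ≤ ‖fderiv ℝ (twist a) z v‖ ^ 2 := by
  have ha' : (1 : ℝ) ≤ a ^ 2 := one_le_pow₀ (by exact_mod_cast ha)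
  rw [sq_norm_fderiv_twist a hz, sq_norm_eq_sq_norm_mul_inv_mul hz v]
  gcongr
  nlinarith [sq_nonneg (z⁻¹ * v).im]

theorem sq_norm_fderiv_twist_le (ha : 1 ≤ a) {z : ℂ} (hz : z ≠ 0) (v : ℂ) :
    ‖fderiv ℝ (twist a) z v‖ ^ 2 ≤ a ^ 2 * ‖v‖ ^ 2 := by
  have ha' : (1 : ℝ) ≤ a ^ 2 := one_le_pow₀ (by exact_mod_cast ha)
  rw [sq_norm_fderiv_twist a hz, sq_norm_eq_sq_norm_mul_inv_mul hz v, mul_left_comm]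
  gcongr
  nlinarith [sq_nonneg (z⁻¹ * v).re]

end Twist

section MultiTwist

variable {n a : ℕ} {p : EuclideanSpace ℂ (Fin (n + 1))}

theorem differentiableAt_multiTwist (hnz : ∀ j, p j ≠ 0) :
    DifferentiableAt ℝ (multiTwist n a) p :=
  PiLp.differentiableAt_map 2 fun j => (hasFDerivAt_twist a (hnz j)).differentiableAt

theorem sq_norm_fderiv_multiTwist (hnz : ∀ j, p j ≠ 0) (v : EuclideanSpace ℂ (Fin (n + 1))) :
    ‖fderiv ℝ (multiTwist n a) p v‖ ^ 2 = ∑ j, ‖fderiv ℝ (twist a) (p j) (v j)‖ ^ 2 := by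
  rw [EuclideanSpace.norm_sq_eq]
  refine Finset.sum_congr rfl fun j _ => congrArg (‖·‖ ^ 2) ?_
  exact PiLp.fderiv_map_apply 2 (fun j => (hasFDerivAt_twist a (hnz j)).differentiableAt) v j

theorem norm_le_norm_fderiv_multiTwist (ha : 1 ≤ a) (hnz : ∀ j, p j ≠ 0)
    (v : EuclideanSpace ℂ (Fin (n + 1))) : ‖v‖ ≤ ‖fderiv ℝ (multiTwist n a) p v‖ := by
  rw [← sq_le_sq₀ (norm_nonneg _) (norm_nonneg _), sq_norm_fderiv_multiTwist hnz,
    EuclideanSpace.norm_sq_eq]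
  exact Finset.sum_le_sum fun j _ => sq_norm_le_sq_norm_fderiv_twist a ha (hnz j) (v j)

theorem norm_fderiv_multiTwist_le (ha : 1 ≤ a) (hnz : ∀ j, p j ≠ 0)
    (v : EuclideanSpace ℂ (Fin (n + 1))) : ‖fderiv ℝ (multiTwist n a) p v‖ ≤ a * ‖v‖ := by
  rw [← sq_le_sq₀ (norm_nonneg _) (by positivity), sq_norm_fderiv_multiTwist hnz, mul_pow,
    EuclideanSpace.norm_sq_eq, Finset.mul_sum]
  exact Finset.sum_le_sum fun j _ => sq_norm_fderiv_twist_le a ha (hnz j) (v j)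

end MultiTwist

theorem multiTwist_differential_bounds_general (n a : ℕ) (ha : 0 < a)
    (p : EuclideanSpace ℂ (Fin (n + 1))) (hnz : ∀ j, p j ≠ 0) :
    DifferentiableAt ℝ (multiTwist n a) p ∧
    (∀ v : EuclideanSpace ℂ (Fin (n + 1)),
      (∑ j, (starRingEnd ℂ) (p j) * v j).re = 0 →
      ‖v‖ ≤ ‖fderiv ℝ (multiTwist n a) p v‖ ∧ ‖fderiv ℝ (multiTwist n a) p v‖ ≤ a * ‖v‖) ∧
    (∀ v : EuclideanSpace ℂ (Fin (n + 1)),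
      ‖fderiv ℝ (multiTwist n a) p v‖ ^ 2 =
        ∑ j, ((Real.cos (Complex.arg (p j)) * (v j).re
                + Real.sin (Complex.arg (p j)) * (v j).im) ^ 2
              + (a : ℝ) ^ 2 * (Real.sin (Complex.arg (p j)) * (v j).re
                - Real.cos (Complex.arg (p j)) * (v j).im) ^ 2)) := by
  refine ⟨differentiableAt_multiTwist hnz,
    fun v _ => ⟨norm_le_norm_fderiv_multiTwist ha hnz v, norm_fderiv_multiTwist_le ha hnz v⟩,
    fun v => ?_⟩
  rw [sq_norm_fderiv_multiTwist hnz]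
  exact Finset.sum_congr rfl fun j _ => sq_norm_fderiv_twist_eq_polar a (hnz j) (v j)

/-- At every point `p` of the unit sphere `S^{2n+1} ⊂ ℂ^{n+1}` with all coordinates nonzero,
the multi-twist map `F_a` is differentiable, its differential satisfies
`‖v‖ ≤ ‖(F_a)_* v‖ ≤ a ‖v‖` for every tangent vector `v`, and in polar coordinates one has
`‖(F_a)_* v‖² = Σⱼ ((cos θⱼ v_{xⱼ} + sin θⱼ v_{yⱼ})² + a² (sin θⱼ v_{xⱼ} - cos θⱼ v_{yⱼ})²)`. -/
theorem multiTwist_differential_bounds (n a : ℕ) (ha : 0 < a)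
    (p : EuclideanSpace ℂ (Fin (n + 1))) (hp : ‖p‖ = 1) (hnz : ∀ j, p j ≠ 0) :
    DifferentiableAt ℝ (multiTwist n a) p ∧
    (∀ v : EuclideanSpace ℂ (Fin (n + 1)),
      (∑ j, (starRingEnd ℂ) (p j) * v j).re = 0 →
      ‖v‖ ≤ ‖fderiv ℝ (multiTwist n a) p v‖ ∧ ‖fderiv ℝ (multiTwist n a) p v‖ ≤ a * ‖v‖) ∧
    (∀ v : EuclideanSpace ℂ (Fin (n + 1)),
      ‖fderiv ℝ (multiTwist n a) p v‖ ^ 2 =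
        ∑ j, ((Real.cos (Complex.arg (p j)) * (v j).re
                + Real.sin (Complex.arg (p j)) * (v j).im) ^ 2
              + (a : ℝ) ^ 2 * (Real.sin (Complex.arg (p j)) * (v j).re
                - Real.cos (Complex.arg (p j)) * (v j).im) ^ 2)) :=
  multiTwist_differential_bounds_general n a ha p hnz
end

section
/- Let f be a bundle map of a finite-dimensional normed vector bundle over a set X (linear isomorphisms f_p : F_p → F_{fp} on fibers over a self-map of the base). If every point p is eventually mapped by the induced base map into a set T on which the fiber maps f_q are isometries (up to scalar) and which is forward-invariant, and each point picks up distortion at most once before entering T, then f is uniform: sup_n sup_p ( sup_{v∈F_p}‖(fⁿ)_p v‖/‖v‖ ) / ( inf_{v∈F_p}‖(fⁿ)_p v‖/‖v‖ ) ≤ sup_p ( sup_v ‖f_p v‖/‖v‖ ) / ( inf_v ‖f_p v‖/‖v‖ ). More precisely: if X = T ∪ J ∪ D where f(T) ⊆ T, f(J) ⊆ T ∪ J, f(D) ⊆ T, and f_p is a similarity (‖f_p v‖ = λ(p)‖v‖ for all v) for p ∈ T ∪ J, while f_p has distortion at most K for p ∈ D, then every iterate fⁿ has distortion at most K at every point.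 -/
/-!
Over the forward-invariant set `T ∪ J` every fiber map is a similarity, and similarities are
closed under composition, so every iterate based there is a similarity. A point of `D` is sent
into `T` after one step, so its iterates are a similarity composed with the single map `A p`,
and post-composing with a similarity preserves a distortion bound.
-/

/-- The (linear) map `A` has distortion at most `K`:
`(‖A u‖/‖u‖) ≤ K (‖A v‖/‖v‖)` for all nonzero `u, v`, written multiplicatively. -/
def DistortionLE {U V : Type*} [NormedAddCommGroup U] [NormedAddCommGroup V]
    (K : ℝ) (A : U → V) : Prop :=
  ∀ u v : U, ‖A u‖ * ‖v‖ ≤ K * (‖A v‖ * ‖u‖)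

/-- `A` is a similarity: `‖A v‖ = λ ‖v‖` for some `λ > 0` and all `v`. -/
def IsSimilarityMap {U V : Type*} [NormedAddCommGroup U] [NormedAddCommGroup V]
    (A : U → V) : Prop :=
  ∃ lam : ℝ, 0 < lam ∧ ∀ v, ‖A v‖ = lam * ‖v‖

/-- Iterates of a bundle map: `(fⁿ)_p = A_{τ^{n-1} p} ∘ ⋯ ∘ A_p : F_p → F_{τⁿ p}`. -/
def iterBundleMap {X : Type*} {F : X → Type*} [∀ p, NormedAddCommGroup (F p)]
    [∀ p, Module ℝ (F p)] (τ : X → X) (A : ∀ p, F p →ₗ[ℝ] F (τ p)) :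
    (n : ℕ) → (p : X) → F p →ₗ[ℝ] F (τ^[n] p)
  | 0, _ => LinearMap.id
  | n + 1, p => (iterBundleMap τ A n (τ p)).comp (A p)

section Distortion

variable {U V W : Type*} [NormedAddCommGroup U] [NormedAddCommGroup V] [NormedAddCommGroup W]

theorem IsSimilarityMap.id : IsSimilarityMap (fun u : U => u) :=
  ⟨1, one_pos, fun _ => (one_mul _).symm⟩

theorem IsSimilarityMap.comp {B : V → W} {A : U → V} (hB : IsSimilarityMap B)
    (hA : IsSimilarityMap A) : IsSimilarityMap (B ∘ A) := by
  obtain ⟨μ, hμ, hB⟩ := hB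
  obtain ⟨lam, hlam, hA⟩ := hA
  exact ⟨μ * lam, mul_pos hμ hlam, fun v => by rw [Function.comp_apply, hB, hA, mul_assoc]⟩

theorem IsSimilarityMap.distortionLE {A : U → V} {K : ℝ} (hA : IsSimilarityMap A) (hK : 1 ≤ K) :
    DistortionLE K A := by
  obtain ⟨lam, hlam, hA⟩ := hA
  intro u v
  rw [hA, hA]
  calc lam * ‖u‖ * ‖v‖ ≤ K * (lam * ‖u‖ * ‖v‖) :=
        le_mul_of_one_le_left (by positivity) hK
    _ = K * (lam * ‖v‖ * ‖u‖) := by ring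

theorem IsSimilarityMap.distortionLE_comp {B : V → W} {A : U → V} {K : ℝ}
    (hB : IsSimilarityMap B) (hA : DistortionLE K A) : DistortionLE K (B ∘ A) := by
  obtain ⟨μ, hμ, hB⟩ := hB
  intro u v
  simp only [Function.comp_apply, hB]
  calc μ * ‖A u‖ * ‖v‖ = μ * (‖A u‖ * ‖v‖) := by ring
    _ ≤ μ * (K * (‖A v‖ * ‖u‖)) := mul_le_mul_of_nonneg_left (hA u v) hμ.le
    _ = K * (μ * ‖A v‖ * ‖u‖) := by ring

end Distortion

theorem isSimilarityMap_iterBundleMap {X : Type*} {F : X → Type*}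
    [∀ p, NormedAddCommGroup (F p)] [∀ p, Module ℝ (F p)] {τ : X → X}
    {A : ∀ p, F p →ₗ[ℝ] F (τ p)} {S : Set X} (hS : ∀ p ∈ S, τ p ∈ S)
    (hA : ∀ p ∈ S, IsSimilarityMap (A p)) :
    ∀ (n : ℕ), ∀ p ∈ S, IsSimilarityMap (iterBundleMap τ A n p)
  | 0, _, _ => IsSimilarityMap.id
  | n + 1, p, hp => (isSimilarityMap_iterBundleMap hS hA n (τ p) (hS p hp)).comp (hA p hp)

theorem iterate_distortion_le_general {X : Type*} {F : X → Type*} [∀ p, NormedAddCommGroup (F p)]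
    [∀ p, NormedSpace ℝ (F p)]
    (τ : X → X) (A : ∀ p, F p ≃ₗ[ℝ] F (τ p))
    (T J D : Set X) (hcover : ∀ p, p ∈ T ∨ p ∈ J ∨ p ∈ D)
    (hT : ∀ p ∈ T, τ p ∈ T) (hJ : ∀ p ∈ J, τ p ∈ T ∪ J) (hD : ∀ p ∈ D, τ p ∈ T)
    (K : ℝ) (hK : 1 ≤ K)
    (hsim : ∀ p ∈ T ∪ J, IsSimilarityMap (⇑(A p)))
    (hdist : ∀ p ∈ D, DistortionLE K (⇑(A p))) :
    ∀ (n : ℕ) (p : X),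
      DistortionLE K (⇑(iterBundleMap τ (fun p => (A p).toLinearMap) n p)) := by
  have hTJ : ∀ p ∈ T ∪ J, τ p ∈ T ∪ J := by
    rintro p (hp | hp)
    exacts [Or.inl (hT p hp), hJ p hp]
  have hiter := isSimilarityMap_iterBundleMap (A := fun p => (A p).toLinearMap) hTJ hsim
  intro n p
  rcases hcover p with hp | hp | hp
  · exact (hiter n p (Or.inl hp)).distortionLE hK
  · exact (hiter n p (Or.inr hp)).distortionLE hK
  · cases n with
    | zero => exact IsSimilarityMap.id.distortionLE hK
    | succ n => exact (hiter n (τ p) (Or.inl (hD p hp))).distortionLE_comp (hdist p hp)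

/-- Conformal trap principle for bundle maps: if `X = T ∪ J ∪ D` with `τ(T) ⊆ T`,
`τ(J) ⊆ T ∪ J`, `τ(D) ⊆ T`, the fiber maps are similarities over `T ∪ J` and have
distortion at most `K` over `D`, then every iterate has distortion at most `K` at every
point (the bundle map is uniform). -/
theorem iterate_distortion_le {X : Type*} {F : X → Type*} [∀ p, NormedAddCommGroup (F p)]
    [∀ p, NormedSpace ℝ (F p)] [∀ p, FiniteDimensional ℝ (F p)]
    (τ : X → X) (A : ∀ p, F p ≃ₗ[ℝ] F (τ p))
    (T J D : Set X) (hcover : ∀ p, p ∈ T ∨ p ∈ J ∨ p ∈ D)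
    (hT : ∀ p ∈ T, τ p ∈ T) (hJ : ∀ p ∈ J, τ p ∈ T ∪ J) (hD : ∀ p ∈ D, τ p ∈ T)
    (K : ℝ) (hK : 1 ≤ K)
    (hsim : ∀ p ∈ T ∪ J, IsSimilarityMap (⇑(A p)))
    (hdist : ∀ p ∈ D, DistortionLE K (⇑(A p))) :
    ∀ (n : ℕ) (p : X),
      DistortionLE K (⇑(iterBundleMap τ (fun p => (A p).toLinearMap) n p)) :=
  iterate_distortion_le_general τ A T J D hcover hT hJ hD K hK hsim hdist
end
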